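/- In the symmetric group S₁₀, the permutations σ₁ = (6 7 8 9 10), σ₂ = (1 7 3 4 9), σ₃ = (1 8 4 3 7), σ₄ = (2 5 4 7 6), σ₅ = (2 10 9 4 5) each have cycle structure [1,1,1,1,1,5], satisfy σ₁·σ₂·σ₃·σ₄·σ₅ = identity, and the subgroup they generate acts transitively on {1,…,10}. Hence there exists a transitive product-one tuple in S₁₀ of length 5 with ramification type [[1⁵,5]⁵]. -/
import Mathlib

set_option maxRecDepth 8000

/-- Cycle structure of a permutation of `Fin d`, including fixed points as 1-cycles. -/
def fullCycleType {d : ℕ} (σ : Equiv.Perm (Fin d)) : Multiset ℕ :=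
  σ.cycleType + Multiset.replicate (d - σ.cycleType.sum) 1

/-- Product of a list of permutations, composed left-to-right
(apply the first permutation first). -/
def seqProd {d : ℕ} (l : List (Equiv.Perm (Fin d))) : Equiv.Perm (Fin d) :=
  l.foldr (fun σ acc => σ.trans acc) (Equiv.refl (Fin d))


def σ1 : Equiv.Perm (Fin 10) := c[5, 6, 7, 8, 9]

def σ2 : Equiv.Perm (Fin 10) := c[0, 6, 2, 3, 8]

def σ3 : Equiv.Perm (Fin 10) := c[0, 7, 3, 2, 6]

def σ4 : Equiv.Perm (Fin 10) := c[1, 4, 3, 6, 5]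

def σ5 : Equiv.Perm (Fin 10) := c[1, 9, 8, 3, 4]

lemma key14 (σ : Equiv.Perm (Fin 10)) (h : σ.IsCycle) (hc : σ.support.card = 5) :
    fullCycleType σ = ({1, 1, 1, 1, 1, 5} : Multiset ℕ) := by
  unfold fullCycleType
  rw [h.cycleType, hc]
  decide

lemma trans_aux14 (S : Set (Equiv.Perm (Fin 10))) (h1 : σ1 ∈ S) (h2 : σ2 ∈ S)
    (h4 : σ4 ∈ S) : ∀ x y : Fin 10, ∃ g ∈ Subgroup.closure S, g x = y := by
  have m1 := Subgroup.subset_closure (k := S) h1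
  have m2 := Subgroup.subset_closure (k := S) h2
  have m4 := Subgroup.subset_closure (k := S) h4
  have reach : ∀ x : Fin 10, ∃ g ∈ Subgroup.closure S, g 0 = x := by
    intro x
    fin_cases x
    · exact ⟨1, one_mem _, by decide⟩
    · exact ⟨σ4 * σ4 * σ2, mul_mem (mul_mem m4 m4) m2, by decide⟩
    · exact ⟨σ2 * σ2, mul_mem m2 m2, by decide⟩
    · exact ⟨σ2 * σ2 * σ2, mul_mem (mul_mem m2 m2) m2, by decide⟩
    · exact ⟨σ4 * σ4 * σ4 * σ2, mul_mem (mul_mem (mul_mem m4 m4) m4) m2, by decide⟩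
    · exact ⟨σ4 * σ2, mul_mem m4 m2, by decide⟩
    · exact ⟨σ2, m2, by decide⟩
    · exact ⟨σ1 * σ2, mul_mem m1 m2, by decide⟩
    · exact ⟨σ2 * σ2 * σ2 * σ2, mul_mem (mul_mem (mul_mem m2 m2) m2) m2, by decide⟩
    · exact ⟨σ1 * (σ2 * σ2 * σ2 * σ2),
        mul_mem m1 (mul_mem (mul_mem (mul_mem m2 m2) m2) m2), by decide⟩
  intro x y
  obtain ⟨gx, hgx, hx⟩ := reach x
  obtain ⟨gy, hgy, hy⟩ := reach y
  exact ⟨gy * gx⁻¹, mul_mem hgy (inv_mem hgx), by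
    simp [Equiv.Perm.mul_apply, ← hx, ← hy]⟩

theorem stmt14 :
    (fullCycleType σ1 = ({1, 1, 1, 1, 1, 5} : Multiset ℕ) ∧ fullCycleType σ2 = ({1, 1, 1, 1, 1, 5} : Multiset ℕ) ∧ fullCycleType σ3 = ({1, 1, 1, 1, 1, 5} : Multiset ℕ) ∧ fullCycleType σ4 = ({1, 1, 1, 1, 1, 5} : Multiset ℕ) ∧ fullCycleType σ5 = ({1, 1, 1, 1, 1, 5} : Multiset ℕ)) ∧
    seqProd [σ1, σ2, σ3, σ4, σ5] = Equiv.refl (Fin 10) ∧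
    (∀ x y : Fin 10, ∃ g ∈ Subgroup.closure ({σ1, σ2, σ3, σ4, σ5} : Set (Equiv.Perm (Fin 10))), g x = y) ∧
    (∃ τ : Fin 5 → Equiv.Perm (Fin 10),
      (∀ i, fullCycleType (τ i) = ({1, 1, 1, 1, 1, 5} : Multiset ℕ)) ∧
      seqProd (List.ofFn τ) = Equiv.refl (Fin 10) ∧
      (∀ x y : Fin 10, ∃ g ∈ Subgroup.closure (Set.range τ), g x = y)) := by
  have c1 : fullCycleType σ1 = ({1, 1, 1, 1, 1, 5} : Multiset ℕ) :=
    key14 _ (List.isCycle_formPerm (by decide) (by decide)) (by decide)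
  have c2 : fullCycleType σ2 = ({1, 1, 1, 1, 1, 5} : Multiset ℕ) :=
    key14 _ (List.isCycle_formPerm (by decide) (by decide)) (by decide)
  have c3 : fullCycleType σ3 = ({1, 1, 1, 1, 1, 5} : Multiset ℕ) :=
    key14 _ (List.isCycle_formPerm (by decide) (by decide)) (by decide)
  have c4 : fullCycleType σ4 = ({1, 1, 1, 1, 1, 5} : Multiset ℕ) :=
    key14 _ (List.isCycle_formPerm (by decide) (by decide)) (by decide)
  have c5 : fullCycleType σ5 = ({1, 1, 1, 1, 1, 5} : Multiset ℕ) :=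
    key14 _ (List.isCycle_formPerm (by decide) (by decide)) (by decide)
  refine ⟨⟨c1, c2, c3, c4, c5⟩, by decide,
    trans_aux14 _ (by simp) (by simp) (by simp),
    ![σ1, σ2, σ3, σ4, σ5], ?_, by decide,
    trans_aux14 _ ⟨0, rfl⟩ ⟨1, rfl⟩ ⟨3, rfl⟩⟩
  intro i
  fin_cases i
  · exact c1
  · exact c2
  · exact c3
  · exact c4
  · exact c5
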